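/- arXiv:hep-ph/9410276 — 2 statements merged into one kernel-verified Lean document; each statement's English description precedes it below -/
import Mathlib

section
/- Let γ ∈ (0,1] and α ≥ 0. Let s, x, y, u, v : (0,∞) → ℝ be continuous, with s(r) > 0 for all r, y and v differentiable, and r ↦ r u(r)(γ s(r)² + 4α v(r)²) differentiable, satisfying on (0,∞) the equations (U): v' y − v y' + (2y² + (γ/2) s² + 2v²) u = 0 and (I): (r u (γ s² + 4α v²))' + 2r (γ x s² + 4α y u²) v = 0. Assume: there exists R > 0 with x(r) y(r) > 0 for all r ≥ R; u and v are not both identically zero; and, in case y has no zero on (0,∞), the function Φ(r) := r u v (γ s² + 4α v²)/y tends to 0 as r → 0⁺ and as r → ∞, Φ' is integrable on (0,∞), and the functions r ↦ 2r{[1 + (v² + (γ/4)s²)/y²](γ s² + 4α v²) + 4α v²} u² and r ↦ 2r (x/y) γ s² v² are integrable on (0,∞). Then there exists r₀ ∈ (0,∞) with x(r₀) y(r₀) = 0. -/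
open Set Filter MeasureTheory Topology Real

/-! If `x y` had no zero on `(0,∞)`, it would be positive there (it is positive near infinity),
so `y` never vanishes. Then (U) and (I) give `Φ' = -F`, where `F ≥ 0` is the sum of the two
integrands in the hypothesis; since `Φ` vanishes at both ends, `∫₀^∞ F = 0`. But `F` is continuous
and positive wherever `u` or `v` is nonzero. -/

theorem IsPreconnected.pos_of_continuousOn_of_ne_zero {S : Set ℝ} {f : ℝ → ℝ}
    (hS : IsPreconnected S) (hf : ContinuousOn f S) (hne : ∀ r ∈ S, f r ≠ 0) {a : ℝ}
    (ha : a ∈ S) (hfa : 0 < f a) : ∀ r ∈ S, 0 < f r := by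
  intro r hr
  by_contra! hfr
  obtain ⟨c, hc, hfc⟩ := hS.intermediate_value hr ha hf ⟨hfr, hfa.le⟩
  exact hne c hc hfc

theorem integral_Ioi_of_hasDerivAt_of_tendsto_nhdsGT {E : Type*} [NormedAddCommGroup E]
    [NormedSpace ℝ E] [CompleteSpace E] {f f' : ℝ → E} {a : ℝ} {l m : E}
    (hderiv : ∀ x ∈ Ioi a, HasDerivAt f (f' x) x) (hf' : IntegrableOn f' (Ioi a))
    (hla : Tendsto f (𝓝[>] a) (𝓝 l)) (hm : Tendsto f atTop (𝓝 m)) :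
    ∫ x in Ioi a, f' x = m - l := by
  have hcont : ContinuousWithinAt (Function.update f a l) (Ici a) a := by
    rwa [continuousWithinAt_update_same, Ici_sdiff_left]
  have hderiv' : ∀ x ∈ Ioi a, HasDerivAt (Function.update f a l) (f' x) x := fun x hx =>
    (hderiv x hx).congr_of_eventuallyEq <| (eventually_ne_nhds (ne_of_gt hx)).mono
      fun z hz => Function.update_of_ne hz l f
  have hm' : Tendsto (Function.update f a l) atTop (𝓝 m) :=
    hm.congr' <| (eventually_ne_atTop a).mono fun z hz => (Function.update_of_ne hz l f).symm
  simpa using integral_Ioi_of_hasDerivAt_of_tendsto hcont hderiv' hf' hm'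

theorem setIntegral_pos_of_continuousOn_of_nonneg {S : Set ℝ} {f : ℝ → ℝ} (hS : IsOpen S)
    (hf : ContinuousOn f S) (hf0 : ∀ x ∈ S, 0 ≤ f x) (hfi : IntegrableOn f S) {a : ℝ}
    (ha : a ∈ S) (hfa : 0 < f a) : 0 < ∫ x in S, f x := by
  rw [setIntegral_pos_iff_support_of_nonneg_ae ((ae_restrict_iff' hS.measurableSet).2
    (ae_of_all _ hf0)) hfi, inter_comm]
  exact (hf.isOpen_inter_preimage hS isOpen_compl_singleton).measure_pos _ ⟨a, ha, hfa.ne'⟩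

namespace ElectroweakVortex

variable (γ α : ℝ) (s x y u v : ℝ → ℝ)

/-- The function `Φ` of the paper. -/
noncomputable def flux (r : ℝ) : ℝ :=
  r * u r * v r * (γ * s r ^ 2 + 4 * α * v r ^ 2) / y r

noncomputable def dissipation (r : ℝ) : ℝ :=
  2 * r * ((1 + (v r ^ 2 + γ / 4 * s r ^ 2) / y r ^ 2)
      * (γ * s r ^ 2 + 4 * α * v r ^ 2) + 4 * α * v r ^ 2) * u r ^ 2
    + 2 * r * (x r / y r) * γ * s r ^ 2 * v r ^ 2

variable {γ α s x y u v}

theorem hasDerivAt_flux {r y'r v'r U'r : ℝ} (hyr : y r ≠ 0) (hy : HasDerivAt y y'r r)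
    (hv : HasDerivAt v v'r r)
    (hU : HasDerivAt (fun t => t * u t * (γ * s t ^ 2 + 4 * α * v t ^ 2)) U'r r)
    (hUeq : v'r * y r - v r * y'r + (2 * y r ^ 2 + γ / 2 * s r ^ 2 + 2 * v r ^ 2) * u r = 0)
    (hIeq : U'r + 2 * r * (γ * x r * s r ^ 2 + 4 * α * y r * u r ^ 2) * v r = 0) :
    HasDerivAt (flux γ α s y u v) (-dissipation γ α s x y u v r) r := by
  have hflux : flux γ α s y u v =
      fun t => t * u t * (γ * s t ^ 2 + 4 * α * v t ^ 2) * (v t / y t) := by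
    ext t
    simp only [flux]
    ring
  rw [hflux]
  refine (hU.mul (hv.div hy hyr)).congr_deriv ?_
  rw [eq_neg_of_add_eq_zero_left hIeq, show v'r * y r - v r * y'r
    = -((2 * y r ^ 2 + γ / 2 * s r ^ 2 + 2 * v r ^ 2) * u r) by linarith]
  simp only [dissipation, Pi.div_apply]
  field_simp
  ring

theorem le_dissipation {r : ℝ} (hγ : 0 ≤ γ) (hα : 0 ≤ α) (hr : 0 ≤ r) :
    2 * r * γ * s r ^ 2 * u r ^ 2 + 2 * r * (x r / y r) * γ * s r ^ 2 * v r ^ 2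
      ≤ dissipation γ α s x y u v r := by
  have hquot : 0 ≤ (v r ^ 2 + γ / 4 * s r ^ 2) / y r ^ 2 := by positivity
  have hcoef : γ * s r ^ 2 ≤ (1 + (v r ^ 2 + γ / 4 * s r ^ 2) / y r ^ 2)
      * (γ * s r ^ 2 + 4 * α * v r ^ 2) + 4 * α * v r ^ 2 := by
    have : 0 ≤ 4 * α * v r ^ 2 := by positivity
    nlinarith [mul_nonneg hquot (add_nonneg (mul_nonneg hγ (sq_nonneg (s r))) this)]
  calc _ = 2 * r * (γ * s r ^ 2) * u r ^ 2 + 2 * r * (x r / y r) * γ * s r ^ 2 * v r ^ 2 := by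
        ring
    _ ≤ dissipation γ α s x y u v r := by
        simp only [dissipation]
        gcongr

theorem dissipation_nonneg {r : ℝ} (hγ : 0 ≤ γ) (hα : 0 ≤ α) (hr : 0 ≤ r)
    (hxy : 0 < x r * y r) : 0 ≤ dissipation γ α s x y u v r := by
  have hq : 0 < x r / y r := div_pos_iff.2 (mul_pos_iff.1 hxy)
  exact le_trans (by positivity) (le_dissipation hγ hα hr)

theorem dissipation_pos {r : ℝ} (hγ : 0 < γ) (hα : 0 ≤ α) (hr : 0 < r) (hs : s r ≠ 0)
    (hxy : 0 < x r * y r) (huv : u r ≠ 0 ∨ v r ≠ 0) : 0 < dissipation γ α s x y u v r := by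
  have hq : 0 < x r / y r := div_pos_iff.2 (mul_pos_iff.1 hxy)
  refine lt_of_lt_of_le ?_ (le_dissipation hγ.le hα hr.le)
  rcases huv with hu | hv
  · have : 0 ≤ 2 * r * (x r / y r) * γ * s r ^ 2 * v r ^ 2 := by positivity
    have : 0 < 2 * r * γ * s r ^ 2 * u r ^ 2 := by positivity
    linarith
  · have : 0 ≤ 2 * r * γ * s r ^ 2 * u r ^ 2 := by positivity
    have : 0 < 2 * r * (x r / y r) * γ * s r ^ 2 * v r ^ 2 := by positivity
    linarith

theorem continuousOn_dissipation {S : Set ℝ} (hs : ContinuousOn s S) (hx : ContinuousOn x S)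
    (hy : ContinuousOn y S) (hu : ContinuousOn u S) (hv : ContinuousOn v S)
    (hy0 : ∀ r ∈ S, y r ≠ 0) : ContinuousOn (dissipation γ α s x y u v) S := by
  unfold dissipation
  have hy2 : ∀ r ∈ S, y r ^ 2 ≠ 0 := fun r hr => pow_ne_zero 2 (hy0 r hr)
  fun_prop (disch := assumption)

end ElectroweakVortex

open ElectroweakVortex

/-- Theorem 1 of the paper: any solution of the field equations (U), (I) with
nonvanishing W fields `u, v` must be such that the product `y·x` has at least one zero
in the open interval `(0,∞)`. -/
theorem statement5 (γ α : ℝ) (hγ : γ ∈ Set.Ioc (0:ℝ) 1) (hα : 0 ≤ α)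
    (s x y u v y' v' U' : ℝ → ℝ)
    (hs : ContinuousOn s (Set.Ioi (0:ℝ)))
    (hx : ContinuousOn x (Set.Ioi (0:ℝ)))
    (hyc : ContinuousOn y (Set.Ioi (0:ℝ)))
    (huc : ContinuousOn u (Set.Ioi (0:ℝ)))
    (hvc : ContinuousOn v (Set.Ioi (0:ℝ)))
    (hspos : ∀ r : ℝ, 0 < r → 0 < s r)
    (hy : ∀ r ∈ Set.Ioi (0:ℝ), HasDerivAt y (y' r) r)
    (hv : ∀ r ∈ Set.Ioi (0:ℝ), HasDerivAt v (v' r) r)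
    (hUd : ∀ r ∈ Set.Ioi (0:ℝ),
      HasDerivAt (fun t => t * u t * (γ * s t ^ 2 + 4 * α * v t ^ 2)) (U' r) r)
    (hUeq : ∀ r ∈ Set.Ioi (0:ℝ),
      v' r * y r - v r * y' r
        + (2 * y r ^ 2 + γ / 2 * s r ^ 2 + 2 * v r ^ 2) * u r = 0)
    (hIeq : ∀ r ∈ Set.Ioi (0:ℝ),
      U' r + 2 * r * (γ * x r * s r ^ 2 + 4 * α * y r * u r ^ 2) * v r = 0)
    (hfar : ∃ R : ℝ, 0 < R ∧ ∀ r : ℝ, R ≤ r → 0 < x r * y r)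
    (hnontriv : ∃ r : ℝ, 0 < r ∧ (u r ≠ 0 ∨ v r ≠ 0))
    (hcond : (∀ r : ℝ, 0 < r → y r ≠ 0) →
      (Filter.Tendsto
          (fun r => r * u r * v r * (γ * s r ^ 2 + 4 * α * v r ^ 2) / y r)
          (nhdsWithin 0 (Set.Ioi 0)) (nhds 0)
        ∧ Filter.Tendsto
          (fun r => r * u r * v r * (γ * s r ^ 2 + 4 * α * v r ^ 2) / y r)
          Filter.atTop (nhds 0)
        ∧ MeasureTheory.IntegrableOn
          (deriv (fun r => r * u r * v r * (γ * s r ^ 2 + 4 * α * v r ^ 2) / y r))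
          (Set.Ioi 0)
        ∧ MeasureTheory.IntegrableOn
          (fun r => 2 * r * ((1 + (v r ^ 2 + γ / 4 * s r ^ 2) / y r ^ 2)
              * (γ * s r ^ 2 + 4 * α * v r ^ 2) + 4 * α * v r ^ 2) * u r ^ 2)
          (Set.Ioi 0)
        ∧ MeasureTheory.IntegrableOn
          (fun r => 2 * r * (x r / y r) * γ * s r ^ 2 * v r ^ 2) (Set.Ioi 0))) :
    ∃ r₀ : ℝ, 0 < r₀ ∧ x r₀ * y r₀ = 0 := by
  by_contra! hcon
  obtain ⟨R, hR, hfar⟩ := hfar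
  have hxy : ∀ r ∈ Ioi 0, 0 < x r * y r :=
    isPreconnected_Ioi.pos_of_continuousOn_of_ne_zero (hx.mul hyc) hcon hR (hfar R le_rfl)
  have hy0 : ∀ r ∈ Ioi 0, y r ≠ 0 := fun r hr => right_ne_zero_of_mul (hxy r hr).ne'
  obtain ⟨hflux0, hfluxTop, -, hf, hg⟩ := hcond hy0
  have hint : IntegrableOn (dissipation γ α s x y u v) (Ioi 0) := hf.add hg
  have hzero : ∫ r in Ioi 0, dissipation γ α s x y u v r = 0 := by
    have hftc := integral_Ioi_of_hasDerivAt_of_tendsto_nhdsGT (fun r hr =>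
      hasDerivAt_flux (hy0 r hr) (hy r hr) (hv r hr) (hUd r hr) (hUeq r hr) (hIeq r hr))
      hint.neg hflux0 hfluxTop
    rwa [integral_neg, sub_self, neg_eq_zero] at hftc
  obtain ⟨r₁, hr₁, huv⟩ := hnontriv
  have hpos := setIntegral_pos_of_continuousOn_of_nonneg isOpen_Ioi
    (continuousOn_dissipation hs hx hyc huc hvc hy0)
    (fun r hr => dissipation_nonneg hγ.1.le hα (le_of_lt hr) (hxy r hr)) hint hr₁
    (dissipation_pos hγ.1 hα hr₁ (hspos r₁ hr₁).ne' (hxy r₁ hr₁) huv)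
  exact hpos.ne' hzero
end

section
/- Let β > 0, γ ∈ (0,1], and let n ≥ 1 and m be integers. Let s, z : (0,∞) → ℝ be twice differentiable with s continuous and s(r) > 0 for all r, satisfying the Nielsen–Olesen equations (NO): s'' + s'/r − [z² + (β/2)(s² − 1)] s = 0 and z'' + z'/r − z/r² − z s² = 0 on (0,∞). Assume: z(r) > 0 for r in some interval (0,a); z(r) → 0 and r z(r) → 0 as r → ∞; (z(r) − n/r)/r → z₀ and z'(r) + z(r)/r → 2z₀ as r → 0⁺ for some real z₀; z'(r) + z(r)/r → 0 as r → ∞; r ↦ z s² is integrable on (0,∞); and s(r₀) ≠ 0 for some r₀. Define x(r) := (γ−1) z(r) − (2γn+m)/(2r) and y(r) := γ z(r) − (2γn+m)/(2r). Suppose u, v : (0,∞) → ℝ, with v twice differentiable, u differentiable and r ↦ r u(r)(γ s(r)² + 4 v(r)²) differentiable, satisfy on (0,∞) the equations (V): v'' + v'/r − v/r² + 2(2y'u + y u' + y u/r) − 4 v u² − γ v s² = 0, (U): v' y − v y' + (2y² + (γ/2) s² + 2v²) u = 0, and (I) with α = 1: (r u (γ s² + 4 v²))' + 2r (γ x s²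 + 4 y u²) v = 0. Assume u and v are not both identically zero, v(r) → 0 as r → 0⁺ and as r → ∞, and, in case y has no zero on (0,∞), the function Φ(r) := r u v (γ s² + 4 v²)/y tends to 0 as r → 0⁺ and as r → ∞, Φ' is integrable, and the functions r ↦ 2r{[1 + (v² + (γ/4)s²)/y²](γ s² + 4 v²) + 4 v²} u² and r ↦ 2r (x/y) γ s² v² are integrable on (0,∞). Then −2n < m < 0. -/
open Set Filter MeasureTheory Topology Real

/-!
The vortex profile solves the linear equation `z'' + z'/r - z/r² = z s²`. At a negative
interior minimum the equation would force `z'' < 0`, so `z ≥ 0`; a zero of `z` is then a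
minimum, hence also a zero of `z'`, and uniqueness for the linear ODE contradicts `z > 0` near
the origin. Hence `z > 0`, so `g = z' + z/r` (with `g' = z s²`) increases strictly to `0`, and
`r z` (with `(r z)' = r g`) decreases strictly from `n`: `0 < r z < n`. If `m ≥ 0` or
`m ≤ -2n`, this gives `y ≠ 0` and `x / y ≥ 0`.

Equations (U) and (I) turn `Φ'` into `-(A + B)`, where `A` is a positive multiple of `u²` and
`B = 2r (x/y) γ s² v²`. So `Φ` is antitone with limit `0` at both ends, hence `Φ ≡ 0`, which
forces `u = 0` and `(x/y) v = 0`. The case `x = 0` happens only for `γ = 1, m = -2n`, where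
`y = z`; then (U) makes `v / y` constant, and since `r y → n ≠ 0` while `v → 0` at the origin,
this constant is `0`.
-/

section Monotone

variable {β : Type*} [Preorder β] [TopologicalSpace β] [OrderClosedTopology β] {f : ℝ → β}
  {a r : ℝ} {L : β}

theorem MonotoneOn.le_of_tendsto_atTop (hf : MonotoneOn f (Ioi a)) (h : Tendsto f atTop (𝓝 L))
    (hr : r ∈ Ioi a) : f r ≤ L :=
  ge_of_tendsto h <| (eventually_ge_atTop r).mono fun _ ht => hf hr (lt_of_lt_of_le hr ht) ht

theorem AntitoneOn.ge_of_tendsto_atTop (hf : AntitoneOn f (Ioi a)) (h : Tendsto f atTop (𝓝 L))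
    (hr : r ∈ Ioi a) : L ≤ f r :=
  le_of_tendsto h <| (eventually_ge_atTop r).mono fun _ ht => hf hr (lt_of_lt_of_le hr ht) ht

theorem AntitoneOn.le_of_tendsto_nhdsGT (hf : AntitoneOn f (Ioi a))
    (h : Tendsto f (𝓝[>] a) (𝓝 L)) (hr : r ∈ Ioi a) : f r ≤ L :=
  ge_of_tendsto h <|
    eventually_of_mem (Ioo_mem_nhdsGT (mem_Ioi.1 hr)) fun _ ht => hf ht.1 hr ht.2.le

end Monotone

theorem eq_zero_of_hasDerivAt_of_nonpos_of_tendsto {f f' : ℝ → ℝ}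
    (hf : ∀ r ∈ Ioi (0:ℝ), HasDerivAt f (f' r) r) (hf' : ∀ r ∈ Ioi (0:ℝ), f' r ≤ 0)
    (h0 : Tendsto f (𝓝[>] 0) (𝓝 0)) (hinf : Tendsto f atTop (𝓝 0)) :
    ∀ r ∈ Ioi (0:ℝ), f' r = 0 := by
  have hanti : AntitoneOn f (Ioi 0) := by
    refine antitoneOn_of_deriv_nonpos (convex_Ioi 0) (HasDerivAt.continuousOn hf)
      (fun r hr => ?_) (fun r hr => ?_) <;> rw [interior_Ioi] at hr
    · exact (hf r hr).differentiableAt.differentiableWithinAt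
    · exact (hf r hr).deriv ▸ hf' r hr
  have hzero : ∀ r ∈ Ioi (0:ℝ), f r = 0 := fun r hr =>
    le_antisymm (hanti.le_of_tendsto_nhdsGT h0 hr) (hanti.ge_of_tendsto_atTop hinf hr)
  exact fun r hr => (hf r hr).unique <|
    (hasDerivAt_const r 0).congr_of_eventuallyEq (eventually_of_mem (Ioi_mem_nhds hr) hzero)

theorem IsLocalMin.nonneg_of_hasDerivAt_of_hasDerivAt {f f' : ℝ → ℝ} {c f'' : ℝ}
    (h : IsLocalMin f c) (hf : ∀ᶠ t in 𝓝 c, HasDerivAt f (f' t) t) (hf' : HasDerivAt f' f'' c) :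
    0 ≤ f'' := by
  by_contra! hneg
  have hderiv : deriv f =ᶠ[𝓝 c] f' := hf.mono fun t ht => ht.deriv
  have hmax : IsLocalMax f c := isLocalMax_of_deriv_deriv_neg
    (by rwa [hderiv.deriv_eq, hf'.deriv])
    (by rw [hderiv.eq_of_nhds]; exact h.hasDerivAt_eq_zero hf.self_of_nhds)
    hf.self_of_nhds.continuousAt
  have hconst : ∀ᶠ t in 𝓝 c, f =ᶠ[𝓝 t] fun _ => f c :=
    (h.and hmax).eventually_nhds.mono fun t ht => ht.mono fun s hs => le_antisymm hs.2 hs.1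
  have hzero : f' =ᶠ[𝓝 c] fun _ => 0 := (hconst.and hf).mono fun t ⟨hft, hdt⟩ =>
    hdt.unique ((hasDerivAt_const t (f c)).congr_of_eventuallyEq hft)
  exact hneg.ne (hf'.unique ((hasDerivAt_const c 0).congr_of_eventuallyEq hzero))

theorem lipschitzWith_companion {a b A B : ℝ} (ha : |a| ≤ A) (hb : |b| ≤ B) :
    LipschitzWith (1 + A + B).toNNReal fun P : ℝ × ℝ => (P.2, a * P.2 + b * P.1) := by
  have hA : 0 ≤ A := (abs_nonneg a).trans ha
  have hB : 0 ≤ B := (abs_nonneg b).trans hb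
  refine LipschitzWith.of_dist_le_mul fun P Q => ?_
  have h1 : |P.1 - Q.1| ≤ dist P Q := by rw [Prod.dist_eq, ← Real.dist_eq]; exact le_max_left _ _
  have h2 : |P.2 - Q.2| ≤ dist P Q := by rw [Prod.dist_eq, ← Real.dist_eq]; exact le_max_right _ _
  have hlin : |a * P.2 + b * P.1 - (a * Q.2 + b * Q.1)| ≤ A * dist P Q + B * dist P Q :=
    calc |a * P.2 + b * P.1 - (a * Q.2 + b * Q.1)|
        = |a * (P.2 - Q.2) + b * (P.1 - Q.1)| := by ring_nf
      _ ≤ |a| * |P.2 - Q.2| + |b| * |P.1 - Q.1| := by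
        simpa only [abs_mul] using abs_add_le (a * (P.2 - Q.2)) (b * (P.1 - Q.1))
      _ ≤ A * dist P Q + B * dist P Q := by gcongr
  rw [Real.coe_toNNReal _ (by linarith), Prod.dist_eq, Real.dist_eq, Real.dist_eq]
  have hd := dist_nonneg (x := P) (y := Q)
  exact max_le (by nlinarith) (by nlinarith)

theorem eqOn_zero_of_linear_ode {f f' f'' a b : ℝ → ℝ} {p q : ℝ}
    (ha : ContinuousOn a (Icc p q)) (hb : ContinuousOn b (Icc p q))
    (hf : ∀ t ∈ Icc p q, HasDerivAt f (f' t) t) (hf' : ∀ t ∈ Icc p q, HasDerivAt f' (f'' t) t)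
    (hode : ∀ t ∈ Icc p q, f'' t = a t * f' t + b t * f t) (hq : f q = 0) (hq' : f' q = 0) :
    EqOn f 0 (Icc p q) := by
  obtain ⟨A, hA⟩ := isCompact_Icc.exists_bound_of_continuousOn ha
  obtain ⟨B, hB⟩ := isCompact_Icc.exists_bound_of_continuousOn hb
  let v : ℝ → ℝ × ℝ → ℝ × ℝ := fun t P => (P.2, a t * P.2 + b t * P.1)
  have hsol : ∀ t ∈ Ioc p q,
      HasDerivWithinAt (fun t => (f t, f' t)) (v t (f t, f' t)) (Iic t) t := fun t ht => by
    have := (hf t (Ioc_subset_Icc_self ht)).prodMk (hf' t (Ioc_subset_Icc_self ht))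
    rw [hode t (Ioc_subset_Icc_self ht)] at this
    exact this.hasDerivWithinAt
  have heq := ODE_solution_unique_of_mem_Icc_left (v := v) (g := fun _ => 0)
    (fun t ht => (lipschitzWith_companion (hA t (Ioc_subset_Icc_self ht))
      (hB t (Ioc_subset_Icc_self ht))).lipschitzOnWith (s := univ))
    (HasDerivAt.continuousOn fun t ht => (hf t ht).prodMk (hf' t ht)) hsol (fun _ _ => mem_univ _)
    continuousOn_const
    (fun t _ => by rw [show v t 0 = 0 by simp [v]]; exact hasDerivWithinAt_const _ _ _)
    (fun _ _ => mem_univ _) (by simp [hq, hq'])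
  exact fun t ht => congrArg Prod.fst (heq ht)

theorem tendsto_mul_nhdsGT_of_tendsto_sub_div {z : ℝ → ℝ} {N z₀ : ℝ}
    (h : Tendsto (fun r => (z r - N / r) / r) (𝓝[>] 0) (𝓝 z₀)) :
    Tendsto (fun r => r * z r) (𝓝[>] 0) (𝓝 N) := by
  have hsq : Tendsto (fun r : ℝ => r ^ 2) (𝓝[>] 0) (𝓝 0) := by
    simpa using ((continuous_pow 2).tendsto (0:ℝ)).mono_left nhdsWithin_le_nhds
  have := (hsq.mul h).add_const N
  rw [zero_mul, zero_add] at this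
  refine this.congr' (eventually_of_mem self_mem_nhdsWithin fun r (hr : 0 < r) => ?_)
  field_simp
  ring

section VortexProfile

variable {z z' z'' q : ℝ → ℝ}

theorem vortex_nonneg_of_isLocalMin {c : ℝ} (hc : 0 < c)
    (hz : ∀ r ∈ Ioi (0:ℝ), HasDerivAt z (z' r) r) (hz' : ∀ r ∈ Ioi (0:ℝ), HasDerivAt z' (z'' r) r)
    (hode : ∀ r ∈ Ioi (0:ℝ), z'' r + z' r / r - z r / r ^ 2 - z r * q r = 0)
    (hq : 0 ≤ q c) (hmin : IsLocalMin z c) : 0 ≤ z c := by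
  have hz'c : z' c = 0 := hmin.hasDerivAt_eq_zero (hz c hc)
  have hz''c : 0 ≤ z'' c :=
    hmin.nonneg_of_hasDerivAt_of_hasDerivAt (eventually_of_mem (Ioi_mem_nhds hc) hz) (hz' c hc)
  have hcoeff : 0 < 1 / c ^ 2 + q c := by positivity
  have hode_c : z'' c = z c * (1 / c ^ 2 + q c) := by
    have := hode c hc
    rw [hz'c] at this
    field_simp at this ⊢
    linarith
  exact nonneg_of_mul_nonneg_left (hode_c ▸ hz''c) hcoeff

theorem vortex_nonneg {a : ℝ} (ha : 0 < a)
    (hz : ∀ r ∈ Ioi (0:ℝ), HasDerivAt z (z' r) r) (hz' : ∀ r ∈ Ioi (0:ℝ), HasDerivAt z' (z'' r) r)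
    (hode : ∀ r ∈ Ioi (0:ℝ), z'' r + z' r / r - z r / r ^ 2 - z r * q r = 0)
    (hq : ∀ r ∈ Ioi (0:ℝ), 0 ≤ q r) (hza : ∀ r : ℝ, 0 < r → r < a → 0 < z r)
    (hzinf : Tendsto z atTop (𝓝 0)) :
    ∀ r ∈ Ioi (0:ℝ), 0 ≤ z r := by
  intro r₁ hr₁
  by_contra! hneg
  have har₁ : a ≤ r₁ := not_lt.1 fun h => (hza r₁ hr₁ h).not_gt hneg
  obtain ⟨R, hR⟩ := eventually_atTop.1 (hzinf.eventually (lt_mem_nhds hneg))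
  set R' := max R r₁
  have hIcc : Icc (a / 2) R' ⊆ Ioi 0 := fun t ht => lt_of_lt_of_le (half_pos ha) ht.1
  obtain ⟨c, hc, hcmin⟩ := isCompact_Icc.exists_isMinOn
    (nonempty_Icc.2 (by linarith [le_max_right R r₁]))
    (HasDerivAt.continuousOn fun t ht => hz t (hIcc ht))
  have hcr₁ : z c ≤ z r₁ := hcmin ⟨by linarith, le_max_right R r₁⟩
  have hca : c ≠ a / 2 := fun h => by
    linarith [hza (a / 2) (half_pos ha) (half_lt_self ha), h ▸ hcr₁]
  have hcR : c ≠ R' := fun h => by linarith [hR R' (le_max_left R r₁), h ▸ hcr₁]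
  have hlocal : IsLocalMin z c :=
    hcmin.isLocalMin (Icc_mem_nhds (lt_of_le_of_ne hc.1 hca.symm) (lt_of_le_of_ne hc.2 hcR))
  linarith [vortex_nonneg_of_isLocalMin (hIcc hc) hz hz' hode (hq c (hIcc hc)) hlocal]

theorem vortex_pos {a : ℝ} (ha : 0 < a)
    (hz : ∀ r ∈ Ioi (0:ℝ), HasDerivAt z (z' r) r) (hz' : ∀ r ∈ Ioi (0:ℝ), HasDerivAt z' (z'' r) r)
    (hode : ∀ r ∈ Ioi (0:ℝ), z'' r + z' r / r - z r / r ^ 2 - z r * q r = 0)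
    (hqc : ContinuousOn q (Ioi 0)) (hq : ∀ r ∈ Ioi (0:ℝ), 0 ≤ q r)
    (hza : ∀ r : ℝ, 0 < r → r < a → 0 < z r) (hzinf : Tendsto z atTop (𝓝 0)) :
    ∀ r ∈ Ioi (0:ℝ), 0 < z r := by
  have hnn := vortex_nonneg ha hz hz' hode hq hza hzinf
  intro c hc
  refine (hnn c hc).lt_of_ne' fun hzc => ?_
  have hmin : IsLocalMin z c := eventually_of_mem (Ioi_mem_nhds hc) fun t ht => hzc ▸ hnn t ht
  set p := min a c / 2
  have hp : 0 < p := half_pos (lt_min ha hc)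
  have hpa : p < a := (half_lt_self (lt_min ha hc)).trans_le (min_le_left a c)
  have hpc : p ≤ c := ((half_lt_self (lt_min ha hc)).trans_le (min_le_right a c)).le
  have hIcc : Icc p c ⊆ Ioi 0 := fun t ht => lt_of_lt_of_le hp ht.1
  have hzero := eqOn_zero_of_linear_ode (a := fun t => -1 / t) (b := fun t => 1 / t ^ 2 + q t)
    (continuousOn_const.div continuousOn_id fun t ht => (hIcc ht).ne')
    ((continuousOn_const.div (continuousOn_id.pow 2) fun t ht => pow_ne_zero 2 (hIcc ht).ne').add
      (hqc.mono hIcc))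
    (fun t ht => hz t (hIcc ht)) (fun t ht => hz' t (hIcc ht))
    (fun t ht => by
      have := hode t (hIcc ht)
      have ht0 : t ≠ 0 := (hIcc ht).ne'
      field_simp at this ⊢
      linarith)
    hzc (hmin.hasDerivAt_eq_zero (hz c hc))
  exact (hza p hp hpa).ne' (hzero ⟨le_rfl, hpc⟩)

theorem vortex_mul_lt {N : ℝ}
    (hz : ∀ r ∈ Ioi (0:ℝ), HasDerivAt z (z' r) r) (hz' : ∀ r ∈ Ioi (0:ℝ), HasDerivAt z' (z'' r) r)
    (hode : ∀ r ∈ Ioi (0:ℝ), z'' r + z' r / r - z r / r ^ 2 - z r * q r = 0)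
    (hq : ∀ r ∈ Ioi (0:ℝ), 0 < q r) (hzpos : ∀ r ∈ Ioi (0:ℝ), 0 < z r)
    (hginf : Tendsto (fun r => z' r + z r / r) atTop (𝓝 0))
    (hw0 : Tendsto (fun r => r * z r) (𝓝[>] 0) (𝓝 N)) :
    ∀ r ∈ Ioi (0:ℝ), r * z r < N := by
  set g := fun r => z' r + z r / r
  have hgd : ∀ r ∈ Ioi (0:ℝ), HasDerivAt g (z r * q r) r := fun r hr => by
    have hr0 : r ≠ 0 := ne_of_gt hr
    refine ((hz' r hr).add ((hz r hr).div (hasDerivAt_id' r) hr0)).congr_deriv ?_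
    have := hode r hr
    field_simp at this ⊢
    linarith
  have hwd : ∀ r ∈ Ioi (0:ℝ), HasDerivAt (fun r => r * z r) (r * g r) r := fun r hr => by
    have hr0 : r ≠ 0 := ne_of_gt hr
    refine ((hasDerivAt_id' r).mul (hz r hr)).congr_deriv ?_
    simp only [g]
    field_simp
    ring
  have hgmono : StrictMonoOn g (Ioi 0) :=
    strictMonoOn_of_deriv_pos (convex_Ioi 0) (HasDerivAt.continuousOn hgd) fun r hr => by
      rw [interior_Ioi] at hr
      rw [(hgd r hr).deriv]
      exact mul_pos (hzpos r hr) (hq r hr)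
  have hgneg : ∀ r ∈ Ioi (0:ℝ), g r < 0 := fun r (hr : 0 < r) => by
    have hr1 : r + 1 ∈ Ioi (0:ℝ) := mem_Ioi.2 (by linarith)
    exact (hgmono hr hr1 (lt_add_one r)).trans_le
      (hgmono.monotoneOn.le_of_tendsto_atTop hginf hr1)
  have hwanti : StrictAntiOn (fun r => r * z r) (Ioi 0) :=
    strictAntiOn_of_deriv_neg (convex_Ioi 0) (HasDerivAt.continuousOn hwd) fun r hr => by
      rw [interior_Ioi] at hr
      rw [(hwd r hr).deriv]
      exact mul_neg_of_pos_of_neg hr (hgneg r hr)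
  intro r (hr : 0 < r)
  exact (hwanti (half_pos hr) hr (half_lt_self hr)).trans_le
    (hwanti.antitoneOn.le_of_tendsto_nhdsGT hw0 (half_pos hr))

end VortexProfile

theorem background_sign {γ N M r ζ X Y : ℝ} (hγ : γ ∈ Ioc 0 1) (hr : 0 < r) (hζ : 0 < r * ζ)
    (hζN : r * ζ < N) (hM : 0 ≤ M ∨ M ≤ -2 * N)
    (hX : X = (γ - 1) * ζ - (2 * γ * N + M) / (2 * r))
    (hY : Y = γ * ζ - (2 * γ * N + M) / (2 * r)) :
    Y ≠ 0 ∧ 0 ≤ X / Y ∧ (X = 0 → γ = 1 ∧ M = -2 * N) := by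
  obtain ⟨hγ0, hγ1⟩ := hγ
  have hY' : 2 * r * Y = 2 * γ * (r * ζ) - (2 * γ * N + M) := by rw [hY]; field_simp
  have hX' : 2 * r * X = 2 * r * Y - 2 * (r * ζ) := by rw [hX, hY]; ring
  rcases hM with hM | hM
  · have hYneg : Y < 0 := by nlinarith
    have hXneg : X < 0 := by nlinarith
    exact ⟨hYneg.ne, div_nonneg_of_nonpos hXneg.le hYneg.le, fun h => absurd h hXneg.ne⟩
  · have hsplit : 2 * r * X = 2 * ((1 - γ) * (N - r * ζ)) + (-2 * N - M) := by
      rw [hX', hY']; ring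
    have h1 : 0 ≤ (1 - γ) * (N - r * ζ) := mul_nonneg (by linarith) (by linarith)
    have hYpos : 0 < Y := by nlinarith
    have hXnn : 0 ≤ X := by nlinarith
    refine ⟨hYpos.ne', div_nonneg hXnn hYpos.le, fun hX0 => ?_⟩
    rw [hX0, mul_zero] at hsplit
    have hγN : (1 - γ) * (N - r * ζ) = 0 := by linarith
    exact ⟨by linarith [(mul_eq_zero.1 hγN).resolve_right (by linarith)], by linarith⟩

theorem hasDerivAt_flux {γ r : ℝ} {s u v x y y' v' U' : ℝ → ℝ} (hy : y r ≠ 0)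
    (hyd : HasDerivAt y (y' r) r) (hvd : HasDerivAt v (v' r) r)
    (hUd : HasDerivAt (fun t => t * u t * (γ * s t ^ 2 + 4 * v t ^ 2)) (U' r) r)
    (hU : v' r * y r - v r * y' r + (2 * y r ^ 2 + γ / 2 * s r ^ 2 + 2 * v r ^ 2) * u r = 0)
    (hI : U' r + 2 * r * (γ * x r * s r ^ 2 + 4 * y r * u r ^ 2) * v r = 0) :
    HasDerivAt (fun t => t * u t * v t * (γ * s t ^ 2 + 4 * v t ^ 2) / y t)
      (-(2 * r * ((1 + (v r ^ 2 + γ / 4 * s r ^ 2) / y r ^ 2) * (γ * s r ^ 2 + 4 * v r ^ 2)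
          + 4 * v r ^ 2) * u r ^ 2 + 2 * r * (x r / y r) * γ * s r ^ 2 * v r ^ 2)) r := by
  have hfun : (fun t => t * u t * v t * (γ * s t ^ 2 + 4 * v t ^ 2) / y t)
      = fun t => t * u t * (γ * s t ^ 2 + 4 * v t ^ 2) * v t / y t := funext fun t => by ring
  rw [hfun]
  refine ((hUd.mul hvd).div hyd hy).congr_deriv ?_
  simp only [Pi.mul_apply]
  field_simp
  linear_combination 4 * (v r * y r) * hI + 4 * (r * u r * (γ * s r ^ 2 + 4 * v r ^ 2)) * hU

theorem eq_zero_of_flux_tendsto_zero {γ : ℝ} {s u v x y y' v' U' : ℝ → ℝ} (hγ : 0 < γ)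
    (hs : ∀ r : ℝ, 0 < r → 0 < s r) (hy : ∀ r : ℝ, 0 < r → y r ≠ 0)
    (hxy : ∀ r ∈ Ioi (0:ℝ), 0 ≤ x r / y r)
    (hyd : ∀ r ∈ Ioi (0:ℝ), HasDerivAt y (y' r) r) (hvd : ∀ r ∈ Ioi (0:ℝ), HasDerivAt v (v' r) r)
    (hUd : ∀ r ∈ Ioi (0:ℝ),
      HasDerivAt (fun t => t * u t * (γ * s t ^ 2 + 4 * v t ^ 2)) (U' r) r)
    (hU : ∀ r ∈ Ioi (0:ℝ),
      v' r * y r - v r * y' r + (2 * y r ^ 2 + γ / 2 * s r ^ 2 + 2 * v r ^ 2) * u r = 0)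
    (hI : ∀ r ∈ Ioi (0:ℝ), U' r + 2 * r * (γ * x r * s r ^ 2 + 4 * y r * u r ^ 2) * v r = 0)
    (h0 : Tendsto (fun r => r * u r * v r * (γ * s r ^ 2 + 4 * v r ^ 2) / y r) (𝓝[>] 0) (𝓝 0))
    (hinf : Tendsto (fun r => r * u r * v r * (γ * s r ^ 2 + 4 * v r ^ 2) / y r) atTop (𝓝 0)) :
    ∀ r ∈ Ioi (0:ℝ), u r = 0 ∧ (x r = 0 ∨ v r = 0) := by
  have hcoeff : ∀ r ∈ Ioi (0:ℝ), 0 < 2 * r * ((1 + (v r ^ 2 + γ / 4 * s r ^ 2) / y r ^ 2)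
      * (γ * s r ^ 2 + 4 * v r ^ 2) + 4 * v r ^ 2) := fun r (hr : 0 < r) => by
    have := hs r hr
    positivity
  have hB : ∀ r ∈ Ioi (0:ℝ), 0 ≤ 2 * r * (x r / y r) * γ * s r ^ 2 * v r ^ 2 :=
    fun r (hr : 0 < r) => by
    have := hxy r hr
    positivity
  have hsum := eq_zero_of_hasDerivAt_of_nonpos_of_tendsto
    (fun r hr => hasDerivAt_flux (hy r hr) (hyd r hr) (hvd r hr) (hUd r hr) (hU r hr) (hI r hr))
    (fun r hr => neg_nonpos.2 (add_nonneg (mul_nonneg (hcoeff r hr).le (sq_nonneg _)) (hB r hr)))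
    h0 hinf
  intro r (hr : 0 < r)
  have hA := mul_nonneg (hcoeff r hr).le (sq_nonneg (u r))
  have hAB := neg_eq_zero.1 (hsum r hr)
  refine ⟨pow_eq_zero_iff two_ne_zero |>.1 <|
    (mul_eq_zero.1 (by linarith [hB r hr])).resolve_left (hcoeff r hr).ne', ?_⟩
  have hBr : 2 * r * (x r / y r) * γ * s r ^ 2 * v r ^ 2 = 0 := by linarith [hB r hr]
  simpa [hr.ne', hγ.ne', (hs r hr).ne', hy r hr, div_eq_zero_iff] using hBr

theorem eq_zero_of_wronskian_eq_zero {v v' y y' : ℝ → ℝ} {N : ℝ} (hN : N ≠ 0)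
    (hvd : ∀ r ∈ Ioi (0:ℝ), HasDerivAt v (v' r) r) (hyd : ∀ r ∈ Ioi (0:ℝ), HasDerivAt y (y' r) r)
    (hy : ∀ r : ℝ, 0 < r → y r ≠ 0) (hW : ∀ r ∈ Ioi (0:ℝ), v' r * y r - v r * y' r = 0)
    (hy0 : Tendsto (fun r => r * y r) (𝓝[>] 0) (𝓝 N)) (hv0 : Tendsto v (𝓝[>] 0) (𝓝 0)) :
    ∀ r ∈ Ioi (0:ℝ), v r = 0 := by
  have hquot : ∀ r ∈ Ioi (0:ℝ), HasDerivAt (fun t => v t / y t) 0 r := fun r hr =>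
    ((hvd r hr).div (hyd r hr) (hy r hr)).congr_deriv (by rw [hW r hr, zero_div])
  obtain ⟨k, hk⟩ := isOpen_Ioi.exists_is_const_of_deriv_eq_zero isPreconnected_Ioi
    (fun r hr => (hquot r hr).differentiableAt.differentiableWithinAt)
    (fun r hr => (hquot r hr).deriv)
  have hvk : ∀ r ∈ Ioi (0:ℝ), v r = k * y r := fun r hr => by
    rw [← hk r hr, div_mul_cancel₀ _ (hy r hr)]
  have hlim : Tendsto (fun r => r * v r) (𝓝[>] 0) (𝓝 (k * N)) :=
    (hy0.const_mul k).congr' <| eventually_of_mem self_mem_nhdsWithin fun r hr => by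
      show k * (r * y r) = r * v r
      rw [hvk r hr]; ring
  have hlim0 : Tendsto (fun r => r * v r) (𝓝[>] 0) (𝓝 0) := by
    simpa using (tendsto_nhdsWithin_of_tendsto_nhds tendsto_id).mul hv0
  have hk0 : k = 0 := (mul_eq_zero.1 (tendsto_nhds_unique hlim hlim0)).resolve_right hN
  intro r hr
  rw [hvk r hr, hk0, zero_mul]

theorem statement7_general (γ : ℝ) (hγ : γ ∈ Set.Ioc (0:ℝ) 1)
    (n m : ℤ) (hn : 1 ≤ n)
    (s z s' z' z'' : ℝ → ℝ) (z₀ : ℝ)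
    (hsd : ∀ r ∈ Set.Ioi (0:ℝ), HasDerivAt s (s' r) r)
    (hzd : ∀ r ∈ Set.Ioi (0:ℝ), HasDerivAt z (z' r) r)
    (hzd' : ∀ r ∈ Set.Ioi (0:ℝ), HasDerivAt z' (z'' r) r)
    (hspos : ∀ r : ℝ, 0 < r → 0 < s r)
    (hNOz : ∀ r ∈ Set.Ioi (0:ℝ),
      z'' r + z' r / r - z r / r ^ 2 - z r * s r ^ 2 = 0)
    (hza : ∃ a : ℝ, 0 < a ∧ ∀ r : ℝ, 0 < r → r < a → 0 < z r)
    (hzinf : Filter.Tendsto z Filter.atTop (nhds 0))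
    (hz0 : Filter.Tendsto (fun r => (z r - (n:ℝ) / r) / r)
      (nhdsWithin 0 (Set.Ioi 0)) (nhds z₀))
    (hginf : Filter.Tendsto (fun r => z' r + z r / r) Filter.atTop (nhds 0))
    (x y y' u v v' U' : ℝ → ℝ)
    (hxdef : ∀ r : ℝ, x r = (γ - 1) * z r - (2 * γ * (n:ℝ) + (m:ℝ)) / (2 * r))
    (hydef : ∀ r : ℝ, y r = γ * z r - (2 * γ * (n:ℝ) + (m:ℝ)) / (2 * r))
    (hyd : ∀ r ∈ Set.Ioi (0:ℝ), HasDerivAt y (y' r) r)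
    (hvd : ∀ r ∈ Set.Ioi (0:ℝ), HasDerivAt v (v' r) r)
    (hUd : ∀ r ∈ Set.Ioi (0:ℝ),
      HasDerivAt (fun t => t * u t * (γ * s t ^ 2 + 4 * v t ^ 2)) (U' r) r)
    (hU : ∀ r ∈ Set.Ioi (0:ℝ),
      v' r * y r - v r * y' r
        + (2 * y r ^ 2 + γ / 2 * s r ^ 2 + 2 * v r ^ 2) * u r = 0)
    (hI : ∀ r ∈ Set.Ioi (0:ℝ),
      U' r + 2 * r * (γ * x r * s r ^ 2 + 4 * y r * u r ^ 2) * v r = 0)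
    (hnontriv : ∃ r : ℝ, 0 < r ∧ (u r ≠ 0 ∨ v r ≠ 0))
    (hv0 : Filter.Tendsto v (nhdsWithin 0 (Set.Ioi 0)) (nhds 0))
    (hcond : (∀ r : ℝ, 0 < r → y r ≠ 0) →
      (Filter.Tendsto
          (fun r => r * u r * v r * (γ * s r ^ 2 + 4 * v r ^ 2) / y r)
          (nhdsWithin 0 (Set.Ioi 0)) (nhds 0)
        ∧ Filter.Tendsto
          (fun r => r * u r * v r * (γ * s r ^ 2 + 4 * v r ^ 2) / y r)
          Filter.atTop (nhds 0)
        ∧ MeasureTheory.IntegrableOn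
          (deriv (fun r => r * u r * v r * (γ * s r ^ 2 + 4 * v r ^ 2) / y r))
          (Set.Ioi 0)
        ∧ MeasureTheory.IntegrableOn
          (fun r => 2 * r * ((1 + (v r ^ 2 + γ / 4 * s r ^ 2) / y r ^ 2)
              * (γ * s r ^ 2 + 4 * v r ^ 2) + 4 * v r ^ 2) * u r ^ 2)
          (Set.Ioi 0)
        ∧ MeasureTheory.IntegrableOn
          (fun r => 2 * r * (x r / y r) * γ * s r ^ 2 * v r ^ 2) (Set.Ioi 0))) :
    -2 * n < m ∧ m < 0 := by
  by_contra! hmn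
  have hM : (0:ℝ) ≤ m ∨ (m:ℝ) ≤ -2 * n := by
    rcases le_or_gt 0 m with h | h
    · exact Or.inl (by exact_mod_cast h)
    · exact Or.inr (by exact_mod_cast (by omega : m ≤ -2 * n))
  obtain ⟨a, ha, hza⟩ := hza
  have hzpos := vortex_pos ha hzd hzd' hNOz
    (fun r hr => ((hsd r hr).continuousAt.pow 2).continuousWithinAt)
    (fun r _ => sq_nonneg (s r)) hza hzinf
  have hw0 := tendsto_mul_nhdsGT_of_tendsto_sub_div hz0
  have hzn := vortex_mul_lt hzd hzd' hNOz (fun r hr => pow_pos (hspos r hr) 2) hzpos hginf hw0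
  have hsign : ∀ r ∈ Ioi (0:ℝ), y r ≠ 0 ∧ 0 ≤ x r / y r ∧ (x r = 0 → γ = 1 ∧ (m:ℝ) = -2 * n) :=
    fun r (hr : 0 < r) => background_sign hγ hr (mul_pos hr (hzpos r hr)) (hzn r hr) hM
      (hxdef r) (hydef r)
  obtain ⟨hΦ0, hΦtop, -⟩ := hcond fun r hr => (hsign r hr).1
  have huv := eq_zero_of_flux_tendsto_zero hγ.1 hspos (fun r hr => (hsign r hr).1)
    (fun r hr => (hsign r hr).2.1) hyd hvd hUd hU hI hΦ0 hΦtop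
  have hv : ∀ r ∈ Ioi (0:ℝ), v r = 0 := by
    by_cases hedge : γ = 1 ∧ (m:ℝ) = -2 * n
    · have hyz : y = z := funext fun r => by rw [hydef, hedge.1, hedge.2]; ring
      refine eq_zero_of_wronskian_eq_zero (N := n) (by positivity) hvd hyd
        (fun r hr => (hsign r hr).1) (fun r hr => by simpa [(huv r hr).1] using hU r hr) ?_ hv0
      rwa [hyz]
    · exact fun r hr => (huv r hr).2.resolve_left fun hx => hedge ((hsign r hr).2.2 hx)
  obtain ⟨r, hr, h⟩ := hnontriv
  exact h.elim (· (huv r hr).1) (· (hv r hr))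

/-- Theorem 2 of the paper: any solution of the W field equations (V), (U), (I) (with
`α = 1`) in the fixed background of the embedded Nielsen–Olesen vortex, with
nonvanishing `u, v`, must satisfy `−2n < m < 0`. -/
theorem statement7 (β γ : ℝ) (hβ : 0 < β) (hγ : γ ∈ Set.Ioc (0:ℝ) 1)
    (n m : ℤ) (hn : 1 ≤ n)
    (s z s' s'' z' z'' : ℝ → ℝ) (z₀ : ℝ)
    (hsd : ∀ r ∈ Set.Ioi (0:ℝ), HasDerivAt s (s' r) r)
    (hsd' : ∀ r ∈ Set.Ioi (0:ℝ), HasDerivAt s' (s'' r) r)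
    (hzd : ∀ r ∈ Set.Ioi (0:ℝ), HasDerivAt z (z' r) r)
    (hzd' : ∀ r ∈ Set.Ioi (0:ℝ), HasDerivAt z' (z'' r) r)
    (hspos : ∀ r : ℝ, 0 < r → 0 < s r)
    (hNOs : ∀ r ∈ Set.Ioi (0:ℝ),
      s'' r + s' r / r - (z r ^ 2 + β / 2 * (s r ^ 2 - 1)) * s r = 0)
    (hNOz : ∀ r ∈ Set.Ioi (0:ℝ),
      z'' r + z' r / r - z r / r ^ 2 - z r * s r ^ 2 = 0)
    (hza : ∃ a : ℝ, 0 < a ∧ ∀ r : ℝ, 0 < r → r < a → 0 < z r)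
    (hzinf : Filter.Tendsto z Filter.atTop (nhds 0))
    (hrzinf : Filter.Tendsto (fun r => r * z r) Filter.atTop (nhds 0))
    (hz0 : Filter.Tendsto (fun r => (z r - (n:ℝ) / r) / r)
      (nhdsWithin 0 (Set.Ioi 0)) (nhds z₀))
    (hg0 : Filter.Tendsto (fun r => z' r + z r / r)
      (nhdsWithin 0 (Set.Ioi 0)) (nhds (2 * z₀)))
    (hginf : Filter.Tendsto (fun r => z' r + z r / r) Filter.atTop (nhds 0))
    (hintzs : MeasureTheory.IntegrableOn (fun r => z r * s r ^ 2) (Set.Ioi 0))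
    (hsne : ∃ r₀ : ℝ, 0 < r₀ ∧ s r₀ ≠ 0)
    (x y y' u v u' v' v'' U' : ℝ → ℝ)
    (hxdef : ∀ r : ℝ, x r = (γ - 1) * z r - (2 * γ * (n:ℝ) + (m:ℝ)) / (2 * r))
    (hydef : ∀ r : ℝ, y r = γ * z r - (2 * γ * (n:ℝ) + (m:ℝ)) / (2 * r))
    (hyd : ∀ r ∈ Set.Ioi (0:ℝ), HasDerivAt y (y' r) r)
    (hud : ∀ r ∈ Set.Ioi (0:ℝ), HasDerivAt u (u' r) r)
    (hvd : ∀ r ∈ Set.Ioi (0:ℝ), HasDerivAt v (v' r) r)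
    (hvd' : ∀ r ∈ Set.Ioi (0:ℝ), HasDerivAt v' (v'' r) r)
    (hUd : ∀ r ∈ Set.Ioi (0:ℝ),
      HasDerivAt (fun t => t * u t * (γ * s t ^ 2 + 4 * v t ^ 2)) (U' r) r)
    (hV : ∀ r ∈ Set.Ioi (0:ℝ),
      v'' r + v' r / r - v r / r ^ 2
        + 2 * (2 * y' r * u r + y r * u' r + y r * u r / r)
        - 4 * v r * u r ^ 2 - γ * v r * s r ^ 2 = 0)
    (hU : ∀ r ∈ Set.Ioi (0:ℝ),
      v' r * y r - v r * y' r
        + (2 * y r ^ 2 + γ / 2 * s r ^ 2 + 2 * v r ^ 2) * u r = 0)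
    (hI : ∀ r ∈ Set.Ioi (0:ℝ),
      U' r + 2 * r * (γ * x r * s r ^ 2 + 4 * y r * u r ^ 2) * v r = 0)
    (hnontriv : ∃ r : ℝ, 0 < r ∧ (u r ≠ 0 ∨ v r ≠ 0))
    (hv0 : Filter.Tendsto v (nhdsWithin 0 (Set.Ioi 0)) (nhds 0))
    (hvinf : Filter.Tendsto v Filter.atTop (nhds 0))
    (hcond : (∀ r : ℝ, 0 < r → y r ≠ 0) →
      (Filter.Tendsto
          (fun r => r * u r * v r * (γ * s r ^ 2 + 4 * v r ^ 2) / y r)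
          (nhdsWithin 0 (Set.Ioi 0)) (nhds 0)
        ∧ Filter.Tendsto
          (fun r => r * u r * v r * (γ * s r ^ 2 + 4 * v r ^ 2) / y r)
          Filter.atTop (nhds 0)
        ∧ MeasureTheory.IntegrableOn
          (deriv (fun r => r * u r * v r * (γ * s r ^ 2 + 4 * v r ^ 2) / y r))
          (Set.Ioi 0)
        ∧ MeasureTheory.IntegrableOn
          (fun r => 2 * r * ((1 + (v r ^ 2 + γ / 4 * s r ^ 2) / y r ^ 2)
              * (γ * s r ^ 2 + 4 * v r ^ 2) + 4 * v r ^ 2) * u r ^ 2)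
          (Set.Ioi 0)
        ∧ MeasureTheory.IntegrableOn
          (fun r => 2 * r * (x r / y r) * γ * s r ^ 2 * v r ^ 2) (Set.Ioi 0))) :
    -2 * n < m ∧ m < 0 :=
  statement7_general γ hγ n m hn s z s' z' z'' z₀ hsd hzd hzd' hspos hNOz hza hzinf hz0 hginf x y y'
    u v v' U' hxdef hydef hyd hvd hUd hU hI hnontriv hv0 hcond
end
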